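/- arXiv:1807.03744 — 2 statements merged into one kernel-verified Lean document; each statement's English description precedes it below -/
import Mathlib

section
/- There exists δ₀ ∈ (0, 1/3) such that for every δ ∈ (0, δ₀] and every integer n ≥ 2, P_δ(n) ≥ 2·e^{4δ} / ((n+1)·e^{2δγ}·e^{2δn}·n^{2δ}), where γ is the Euler–Mascheroni constant. -/
open scoped BigOperators
open Filter Set

/-- `P δ n = ℙ(τ ≥ n)` for the perturbed 1-d senile reinforced random walk
(`P δ 1 = 1` since the product is empty). -/
noncomputable def P (δ : ℝ) (n : ℕ) : ℝ :=
  ∏ k ∈ Finset.Icc 2 n, ((k : ℝ) / ((k : ℝ) + 1) - δ)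

lemma aux_exp {x : ℝ} (_h0 : 0 ≤ x) (h1 : x ≤ 1/2) :
    Real.exp (-(x + 2*x^2)) ≤ 1 - x := by
  have h2 : (x + 2*x^2) + 1 ≤ Real.exp (x + 2*x^2) := Real.add_one_le_exp _
  have hx : (0:ℝ) < 1 - x := by linarith
  have hpos := Real.exp_pos (x + 2*x^2)
  have key : 1 ≤ (1 - x) * Real.exp (x + 2*x^2) := by nlinarith
  rw [Real.exp_neg, inv_le_comm₀ hpos hx, inv_le_iff_one_le_mul₀ hx]
  linarith [key]

lemma telescope (n : ℕ) (hn : 1 ≤ n) :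
    ∏ k ∈ Finset.Icc 2 n, ((k:ℝ)/((k:ℝ)+1)) = 2/((n:ℝ)+1) := by
  induction n with
  | zero => omega
  | succ m ih =>
    rcases Nat.eq_or_lt_of_le hn with h | h
    · simp [← h]
      norm_num
    · have hm : 1 ≤ m := by omega
      rw [Finset.prod_Icc_succ_top (by omega : 2 ≤ m + 1), ih hm]
      have hm0 : ((m:ℝ)+1) ≠ 0 := by positivity
      have hm2 : ((m:ℝ)+1+1) ≠ 0 := by positivity
      push_cast
      field_simp

lemma sum_inv_Icc (n : ℕ) (hn : 1 ≤ n) :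
    ∑ k ∈ Finset.Icc 1 n, (1:ℝ)/k = (harmonic n : ℝ) := by
  induction n with
  | zero => omega
  | succ m ih =>
    rcases Nat.eq_or_lt_of_le hn with h | h
    · simp [← h, harmonic_succ]
    · have hm : 1 ≤ m := by omega
      rw [Finset.sum_Icc_succ_top (by omega : 1 ≤ m + 1), ih hm, harmonic_succ]
      push_cast
      ring

set_option maxHeartbeats 1000000

/-- there exists `δ₀ ∈ (0, 1/3)` such that for every `δ ∈ (0, δ₀]` and
integer `n ≥ 2`, `P_δ(n) ≥ 2 e^{4δ} / ((n+1) e^{2δγ} e^{2δn} n^{2δ})`,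
where `γ` is the Euler–Mascheroni constant. -/
theorem P_lower_bound :
    ∃ δ₀ ∈ Set.Ioo (0 : ℝ) (1/3), ∀ δ ∈ Set.Ioc (0 : ℝ) δ₀, ∀ n : ℕ, 2 ≤ n →
      P δ n ≥ 2 * Real.exp (4 * δ) /
        (((n : ℝ) + 1) * Real.exp (2 * δ * Real.eulerMascheroniConstant) *
          Real.exp (2 * δ * n) * (n : ℝ) ^ (2 * δ)) := by
  refine ⟨1/10, ⟨by norm_num, by norm_num⟩, ?_⟩
  rintro δ ⟨hδ0, hδ1⟩ n hn
  set γ := Real.eulerMascheroniConstant with hγdef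
  have hγ : 1/2 < γ := Real.one_half_lt_eulerMascheroniConstant
  have hn0 : (0:ℝ) < n := by positivity
  have hn2 : (2:ℝ) ≤ n := by exact_mod_cast hn
  have hlog2 : Real.log 2 < 0.6931471808 := Real.log_two_lt_d9
  have hlog2' : (0.6931471803:ℝ) < Real.log 2 := Real.log_two_gt_d9
  have hlogn : Real.log 2 ≤ Real.log n := Real.log_le_log (by norm_num) hn2
  have hcast : ((n - 1 : ℕ) : ℝ) = (n:ℝ) - 1 := by
    have h1n : 1 ≤ n := by omega
    push_cast [h1n]
    ring
  -- harmonic bound: H_n ≤ log n + log 2 + γ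
  have hharm : (harmonic n : ℝ) ≤ Real.log n + Real.log 2 + γ := by
    have h1 : Real.eulerMascheroniSeq n < γ :=
      Real.eulerMascheroniSeq_lt_eulerMascheroniConstant n
    have h2 : Real.eulerMascheroniSeq n = (harmonic n : ℝ) - Real.log (n+1) := rfl
    have h3 : Real.log ((n:ℝ)+1) ≤ Real.log (2*n) := by
      apply Real.log_le_log (by positivity)
      nlinarith
    rw [Real.log_mul (by norm_num) (by positivity)] at h3
    rw [h2] at h1
    linarith
  -- the sum ∑_{k=2}^n 1/k = H_n - 1
  have hsum2 : ∑ k ∈ Finset.Icc 2 n, (1:ℝ)/k = (harmonic n : ℝ) - 1 := by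
    have h1 : Finset.Icc 1 n = insert 1 (Finset.Icc 2 n) := by
      ext k
      simp only [Finset.mem_Icc, Finset.mem_insert]
      omega
    have h2 := sum_inv_Icc n (by omega)
    rw [h1, Finset.sum_insert (by simp)] at h2
    norm_num at h2 ⊢
    linarith
  set x : ℕ → ℝ := fun k => δ * (((k:ℝ)+1)/k) with hxdef
  have hcard : (Finset.Icc 2 n).card = n - 1 := by
    rw [Nat.card_Icc]
    omega
  -- sum bound
  have hxsum : ∑ k ∈ Finset.Icc 2 n, (x k + 2*(x k)^2)
      ≤ 2*δ*((n:ℝ) - 2 + Real.log n + γ) := by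
    have hb1 : ∑ k ∈ Finset.Icc 2 n, x k
        = δ * (((n:ℝ) - 1) + ((harmonic n : ℝ) - 1)) := by
      simp only [hxdef]
      rw [← Finset.mul_sum]
      congr 1
      have heq : ∀ k ∈ Finset.Icc 2 n, ((k:ℝ)+1)/k = 1 + 1/k := by
        intro k hk
        have hk2 : 2 ≤ k := (Finset.mem_Icc.mp hk).1
        have : (k:ℝ) ≠ 0 := by positivity
        field_simp
      rw [Finset.sum_congr rfl heq, Finset.sum_add_distrib, hsum2,
        Finset.sum_const, hcard, nsmul_eq_mul, hcast]
      ring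
    have hb2 : ∑ k ∈ Finset.Icc 2 n, 2*(x k)^2 ≤ ((n:ℝ) - 1) * ((9/2) * δ^2) := by
      have hle : ∀ k ∈ Finset.Icc 2 n, 2*(x k)^2 ≤ (9/2) * δ^2 := by
        intro k hk
        have hk2 : 2 ≤ k := (Finset.mem_Icc.mp hk).1
        have hk2' : (2:ℝ) ≤ k := by exact_mod_cast hk2
        have hkpos : (0:ℝ) < k := by linarith
        have ha : ((k:ℝ)+1)/k ≤ 3/2 := by
          rw [div_le_iff₀ hkpos]; linarith
        have ha0 : 0 ≤ ((k:ℝ)+1)/k := by positivity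
        have haa : (((k:ℝ)+1)/k) * (((k:ℝ)+1)/k) ≤ 9/4 := by nlinarith
        simp only [hxdef]
        nlinarith [sq_nonneg δ, mul_le_mul_of_nonneg_left haa (sq_nonneg δ)]
      have hcount : ∑ _k ∈ Finset.Icc 2 n, (9/2)*δ^2
          = ((n:ℝ) - 1) * ((9/2) * δ^2) := by
        rw [Finset.sum_const, hcard, nsmul_eq_mul, hcast]
      exact le_trans (Finset.sum_le_sum hle) (le_of_eq hcount)
    have key : (((n:ℝ) - 1) + ((harmonic n : ℝ) - 1)) + (9/20) * ((n:ℝ)-1)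
        ≤ 2*((n:ℝ) - 2 + Real.log n + γ) := by
      linarith
    have key2 : δ * (((n:ℝ) - 1) + ((harmonic n : ℝ) - 1))
        + δ * ((9/20) * ((n:ℝ)-1)) ≤ 2*δ*((n:ℝ) - 2 + Real.log n + γ) := by
      have := mul_le_mul_of_nonneg_left key hδ0.le
      nlinarith [this]
    have h9 : ((n:ℝ) - 1) * ((9/2) * δ^2) ≤ δ * ((9/20) * ((n:ℝ) - 1)) := by
      nlinarith [mul_nonneg (mul_nonneg (by linarith : (0:ℝ) ≤ (n:ℝ) - 1) hδ0.le)
        (by linarith : (0:ℝ) ≤ 1/10 - δ)]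
    rw [Finset.sum_add_distrib, hb1]
    linarith [hb2, h9, key2]
  -- per-term bound
  have hterm : ∀ k ∈ Finset.Icc 2 n,
      ((k:ℝ)/((k:ℝ)+1)) * Real.exp (-(x k + 2*(x k)^2)) ≤ (k:ℝ)/((k:ℝ)+1) - δ := by
    intro k hk
    have hk2 : 2 ≤ k := (Finset.mem_Icc.mp hk).1
    have hk2' : (2:ℝ) ≤ k := by exact_mod_cast hk2
    have hkpos : (0:ℝ) < k := by linarith
    have hk1 : (0:ℝ) < (k:ℝ)+1 := by linarith
    have ha : ((k:ℝ)+1)/k ≤ 3/2 := by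
      rw [div_le_iff₀ hkpos]; linarith
    have ha0 : 0 ≤ ((k:ℝ)+1)/k := by positivity
    have hx0 : 0 ≤ x k := by simp only [hxdef]; positivity
    have hx12 : x k ≤ 1/2 := by
      simp only [hxdef]
      have h1 : δ * (((k:ℝ)+1)/k) ≤ (1/10) * (3/2) :=
        mul_le_mul hδ1 ha ha0 (by norm_num)
      linarith
    have hexp := aux_exp hx0 hx12
    have hid : (k:ℝ)/((k:ℝ)+1) - δ = ((k:ℝ)/((k:ℝ)+1)) * (1 - x k) := by
      simp only [hxdef]
      field_simp
    rw [hid]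
    exact mul_le_mul_of_nonneg_left hexp (by positivity)
  have hnonneg : ∀ k ∈ Finset.Icc 2 n,
      0 ≤ ((k:ℝ)/((k:ℝ)+1)) * Real.exp (-(x k + 2*(x k)^2)) := by
    intro k hk
    have hk2 : 2 ≤ k := (Finset.mem_Icc.mp hk).1
    have hk2' : (2:ℝ) ≤ k := by exact_mod_cast hk2
    positivity
  -- RHS rewrite
  have hrpow : (n:ℝ) ^ (2*δ) = Real.exp (2*δ*Real.log n) := by
    rw [Real.rpow_def_of_pos hn0]
    ring_nf
  have hrhs : 2 * Real.exp (4 * δ) /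
        (((n : ℝ) + 1) * Real.exp (2 * δ * γ) * Real.exp (2 * δ * n) * (n : ℝ) ^ (2 * δ))
      = 2/((n:ℝ)+1) * Real.exp (-(2*δ*((n:ℝ) - 2 + Real.log n + γ))) := by
    rw [hrpow]
    rw [show -(2*δ*((n:ℝ) - 2 + Real.log n + γ))
        = 4*δ - 2*δ*γ - 2*δ*(n:ℝ) - 2*δ*Real.log n by ring]
    rw [Real.exp_sub, Real.exp_sub, Real.exp_sub]
    have e1 := (Real.exp_pos (2*δ*γ)).ne'
    have e2 := (Real.exp_pos (2*δ*(n:ℝ))).ne'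
    have e3 := (Real.exp_pos (2*δ*Real.log n)).ne'
    have e4 : ((n:ℝ)+1) ≠ 0 := by positivity
    field_simp
  rw [ge_iff_le, hrhs]
  calc 2/((n:ℝ)+1) * Real.exp (-(2*δ*((n:ℝ) - 2 + Real.log n + γ)))
      ≤ 2/((n:ℝ)+1) * Real.exp (-∑ k ∈ Finset.Icc 2 n, (x k + 2*(x k)^2)) := by
        apply mul_le_mul_of_nonneg_left _ (by positivity)
        exact Real.exp_le_exp.mpr (neg_le_neg hxsum)
    _ = ∏ k ∈ Finset.Icc 2 n, (((k:ℝ)/((k:ℝ)+1)) * Real.exp (-(x k + 2*(x k)^2))) := by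
        rw [Finset.prod_mul_distrib, telescope n (by omega), ← Real.exp_sum]
        congr 1
        rw [Finset.sum_neg_distrib]
    _ ≤ P δ n := Finset.prod_le_prod hnonneg hterm
end

section
/- The expected first-edge occupation time grows logarithmically in the perturbation: lim_{δ→0⁺} E(δ)/log(1/δ) = 2, where E(δ) := ∑_{n=1}^∞ P_δ(n). -/
open scoped BigOperators
open Filter Set

/-!
Every factor `x = k/(k+1)` of `P δ (n+1)` lies in `[2/3, 1]`, so
`x (1 - 3δ/2) ≤ x - δ ≤ x (1 - δ)`.
As `∏_{k=2}^{n+1} k/(k+1) = 2/(n+2)`, this squeezes `P δ (n+1)` between `2 rⁿ/(n+2)` for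
`r = 1 - 3δ/2` and `r = 1 - δ`, and `∑ₙ 2 rⁿ/(n+2) = 2 (-log (1-r) - r)/r²`.
With `1 - r = cδ` both bounds are `2 log(1/δ) + O(1)` as `δ → 0⁺`.
-/

lemma prod_Icc_div_succ_mul (n : ℕ) (r : ℝ) :
    ∏ k ∈ Finset.Icc 2 (n + 1), ((k : ℝ) / ((k : ℝ) + 1) * r) =
      2 / ((n : ℝ) + 2) * r ^ n := by
  rw [Finset.prod_mul_distrib, Finset.prod_const, Nat.card_Icc, show n + 1 + 1 - 2 = n by omega]
  congr 1
  induction n with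
  | zero => norm_num
  | succ n ih =>
    rw [Finset.prod_Icc_succ_top (by omega), ih]
    push_cast
    field_simp
    ring

lemma hasSum_two_div_mul_pow {r : ℝ} (hr0 : r ≠ 0) (hr : |r| < 1) :
    HasSum (fun n : ℕ => 2 / ((n : ℝ) + 2) * r ^ n) (2 * (-Real.log (1 - r) - r) / r ^ 2) := by
  have h := ((hasSum_nat_add_iff' 1).mpr (Real.hasSum_pow_div_log_of_abs_lt_one hr)).mul_left
    (2 / r ^ 2)
  have hterm : (fun n : ℕ => 2 / r ^ 2 * (r ^ (n + 1 + 1) / ((n + 1 : ℕ) + 1 : ℝ)))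
      = fun n : ℕ => 2 / ((n : ℝ) + 2) * r ^ n := by
    funext n
    push_cast
    field_simp
    ring
  have hvalue :
      2 / r ^ 2 * (-Real.log (1 - r) - ∑ i ∈ Finset.range 1, r ^ (i + 1) / ((i : ℝ) + 1)) =
        2 * (-Real.log (1 - r) - r) / r ^ 2 := by
    simp only [Finset.sum_range_one, Nat.cast_zero, zero_add, pow_one, div_one]
    ring
  rwa [hterm, hvalue] at h

lemma two_thirds_le_div_succ {k : ℕ} (hk : 2 ≤ k) : (2 : ℝ) / 3 ≤ k / (k + 1) := by
  have hk' : (2 : ℝ) ≤ k := by exact_mod_cast hk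
  rw [div_le_div_iff₀ (by norm_num) (by positivity)]
  linarith

lemma div_succ_le_one (k : ℕ) : (k : ℝ) / (k + 1) ≤ 1 :=
  (div_le_one (by positivity)).mpr (by linarith)

section P

variable {δ : ℝ}

lemma P_nonneg (hδ : δ ≤ 2 / 3) (n : ℕ) : 0 ≤ P δ n :=
  Finset.prod_nonneg fun k hk => by
    linarith [two_thirds_le_div_succ (Finset.mem_Icc.1 hk).1]

lemma P_succ_le (hδ0 : 0 ≤ δ) (hδ : δ ≤ 2 / 3) (n : ℕ) :
    P δ (n + 1) ≤ 2 / ((n : ℝ) + 2) * (1 - δ) ^ n := by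
  rw [← prod_Icc_div_succ_mul, P]
  refine Finset.prod_le_prod (fun k hk => ?_) (fun k _ => ?_)
  · linarith [two_thirds_le_div_succ (Finset.mem_Icc.1 hk).1]
  · nlinarith [div_succ_le_one k]

lemma le_P_succ (hδ0 : 0 ≤ δ) (hδ : δ ≤ 2 / 3) (n : ℕ) :
    2 / ((n : ℝ) + 2) * (1 - 3 / 2 * δ) ^ n ≤ P δ (n + 1) := by
  rw [← prod_Icc_div_succ_mul, P]
  refine Finset.prod_le_prod (fun k _ => ?_) (fun k hk => ?_)
  · have : (0 : ℝ) ≤ k / (k + 1) := by positivity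
    nlinarith
  · nlinarith [two_thirds_le_div_succ (Finset.mem_Icc.1 hk).1]

lemma hasSum_two_div_mul_one_sub_pow {c : ℝ} (hc : 0 < c * δ) (hc1 : c * δ < 1) :
    HasSum (fun n : ℕ => 2 / ((n : ℝ) + 2) * (1 - c * δ) ^ n)
      (2 * (-Real.log (c * δ) - (1 - c * δ)) / (1 - c * δ) ^ 2) := by
  have hr : |1 - c * δ| < 1 := abs_lt.2 ⟨by linarith, by linarith⟩
  simpa only [sub_sub_cancel] using
    hasSum_two_div_mul_pow (by linarith) hr

lemma tsum_P_succ_mem_Icc (hδ0 : 0 < δ) (hδ : δ < 2 / 3) :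
    ∑' n : ℕ, P δ (n + 1) ∈ Icc
      (2 * (-Real.log (3 / 2 * δ) - (1 - 3 / 2 * δ)) / (1 - 3 / 2 * δ) ^ 2)
      (2 * (-Real.log (1 * δ) - (1 - 1 * δ)) / (1 - 1 * δ) ^ 2) := by
  have hlow := hasSum_two_div_mul_one_sub_pow (c := 3 / 2) (δ := δ) (by positivity) (by linarith)
  have hup := hasSum_two_div_mul_one_sub_pow (c := 1) (δ := δ) (by linarith) (by linarith)
  have hP_le (n : ℕ) : P δ (n + 1) ≤ 2 / ((n : ℝ) + 2) * (1 - 1 * δ) ^ n := by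
    simpa only [one_mul] using P_succ_le hδ0.le hδ.le n
  have hP : Summable fun n : ℕ => P δ (n + 1) :=
    hup.summable.of_nonneg_of_le (fun n => P_nonneg hδ.le _) hP_le
  exact ⟨hlow.tsum_eq ▸ hlow.summable.tsum_le_tsum (le_P_succ hδ0.le hδ.le) hP,
    hup.tsum_eq ▸ hP.tsum_le_tsum hP_le hup.summable⟩

end P

lemma tendsto_div_log_inv {c : ℝ} (hc : 0 < c) :
    Tendsto (fun δ : ℝ => 2 * (-Real.log (c * δ) - (1 - c * δ)) / (1 - c * δ) ^ 2
        / Real.log (1 / δ)) (nhdsWithin 0 (Ioi 0)) (nhds 2) := by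
  have hlog : Tendsto (fun δ : ℝ => Real.log (1 / δ)) (nhdsWithin 0 (Ioi 0)) atTop := by
    simpa only [one_div, Function.comp_def] using
      Real.tendsto_log_atTop.comp tendsto_inv_nhdsGT_zero
  have hcont : ContinuousAt (fun δ : ℝ => 2 / (1 - c * δ) ^ 2) 0 := by
    fun_prop (disch := norm_num)
  have hconst : ContinuousAt (fun δ : ℝ => -Real.log c - (1 - c * δ)) 0 := by fun_prop
  -- `-log (cδ) = log (1/δ) - log c` turns the quotient into
  -- `2/(1 - cδ)² · (1 + (-log c - (1 - cδ)) / log (1/δ))`.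
  have hlim := (tendsto_nhdsWithin_of_tendsto_nhds hcont.tendsto).mul
    ((tendsto_const_nhds (x := (1 : ℝ))).add
      ((tendsto_nhdsWithin_of_tendsto_nhds hconst.tendsto).div_atTop hlog))
  simp only [mul_zero, sub_zero, one_pow, div_one, add_zero, mul_one] at hlim
  refine hlim.congr' ?_
  filter_upwards [Ioo_mem_nhdsGT (show (0 : ℝ) < min 1 (1 / c) by positivity)]
    with δ ⟨hδ0, hδ⟩
  have hδ1 : δ < 1 := hδ.trans_le (min_le_left _ _)
  have hcδ : c * δ < 1 := (lt_div_iff₀' hc).1 (hδ.trans_le (min_le_right _ _))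
  have hL : 0 < Real.log (1 / δ) := Real.log_pos (one_lt_one_div hδ0 hδ1)
  have hsplit : Real.log (c * δ) = Real.log c - Real.log (1 / δ) := by
    rw [Real.log_mul hc.ne' hδ0.ne', one_div, Real.log_inv]
    ring
  have : 1 - c * δ ≠ 0 := by linarith
  rw [hsplit]
  field_simp
  ring

/-- `E(δ) = ∑_{n=1}^∞ P_δ(n) = 𝔼[τ]` grows logarithmically:
`lim_{δ→0⁺} E(δ)/log(1/δ) = 2`. -/
theorem expectation_tau_log_asymptotics :
    Tendsto (fun δ : ℝ => (∑' n : ℕ, P δ (n + 1)) / Real.log (1/δ))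
      (nhdsWithin 0 (Set.Ioi 0)) (nhds 2) := by
  have hsmall : Ioo (0 : ℝ) (2 / 3) ∈ nhdsWithin 0 (Ioi 0) := Ioo_mem_nhdsGT (by norm_num)
  have hlog (δ : ℝ) (hδ : δ ∈ Ioo (0 : ℝ) (2 / 3)) : 0 ≤ Real.log (1 / δ) :=
    (Real.log_pos (one_lt_one_div hδ.1 (by linarith [hδ.2]))).le
  refine tendsto_of_tendsto_of_tendsto_of_le_of_le' (tendsto_div_log_inv (c := 3 / 2) (by norm_num))
    (tendsto_div_log_inv (c := 1) one_pos) ?_ ?_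
  · filter_upwards [hsmall] with δ hδ using
      div_le_div_of_nonneg_right (tsum_P_succ_mem_Icc hδ.1 hδ.2).1 (hlog δ hδ)
  · filter_upwards [hsmall] with δ hδ using
      div_le_div_of_nonneg_right (tsum_P_succ_mem_Icc hδ.1 hδ.2).2 (hlog δ hδ)
end
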